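/- arXiv:2504.06030 — 3 statements merged into one kernel-verified Lean document; each statement's English description precedes it below -/
import Mathlib

section
/- Let f(u) = 2(E + μu − (u²/2)(C − Bu)²) with B ≠ 0. Then u is a root of f if and only if u ∈ { (1/(2B))(C + B√λ ± √(C² − B²λ + 4μ/√λ)), (1/(2B))(C − B√λ ± √(C² − B²λ − 4μ/√λ)) } whenever λ > 0 is a real root of the resolvent cubic λ³ − (C²/B²)λ² + (4/B³)(μC + 2BE)λ − 4μ²/B⁴ = 0 (all square roots taken in ℂ). -/
/-!
Ferrari's method. Put `s = √λ`, `A² = C² − B²s² + 4μ/s` and `D² = C² − B²s² − 4μ/s`. The resolvent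
cubic in `λ = s²` is exactly the condition under which
`16B² f(u) = −((2Bu − C − Bs)² − A²)((2Bu − C + Bs)² − D²)`,
so the roots of `f` are those of the two difference-of-squares factors.
-/

section Ferrari

variable {K : Type*} [Field K] {B C E μ s A D : K}

theorem ferrari_factorization (hs : s ≠ 0)
    (hA : A ^ 2 = C ^ 2 - B ^ 2 * s ^ 2 + 4 * μ / s)
    (hD : D ^ 2 = C ^ 2 - B ^ 2 * s ^ 2 - 4 * μ / s)
    (hcubic : B ^ 4 * (s ^ 2) ^ 3 - B ^ 2 * C ^ 2 * (s ^ 2) ^ 2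
      + 4 * B * (μ * C + 2 * B * E) * s ^ 2 - 4 * μ ^ 2 = 0) (u : K) :
    16 * B ^ 2 * (2 * E + 2 * μ * u - u ^ 2 * (C - B * u) ^ 2)
      = -(((2 * B * u - C - B * s) ^ 2 - A ^ 2) * ((2 * B * u - C + B * s) ^ 2 - D ^ 2)) := by
  have hsA : s * A ^ 2 = s * (C ^ 2 - B ^ 2 * s ^ 2) + 4 * μ := by
    rw [hA]; field_simp
  have hsD : s * D ^ 2 = s * (C ^ 2 - B ^ 2 * s ^ 2) - 4 * μ := by
    rw [hD]; field_simp
  refine mul_left_cancel₀ (pow_ne_zero 2 hs) ?_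
  linear_combination (s * D ^ 2 - s * (2 * B * u - C + B * s) ^ 2) * hsA
    - (s * (2 * B * u - C - B * s) ^ 2 - s * (C ^ 2 - B ^ 2 * s ^ 2) - 4 * μ) * hsD
    + 4 * hcubic

theorem quartic_eq_zero_iff (h2B : 2 * B ≠ 0) (hs : s ≠ 0)
    (hA : A ^ 2 = C ^ 2 - B ^ 2 * s ^ 2 + 4 * μ / s)
    (hD : D ^ 2 = C ^ 2 - B ^ 2 * s ^ 2 - 4 * μ / s)
    (hcubic : B ^ 4 * (s ^ 2) ^ 3 - B ^ 2 * C ^ 2 * (s ^ 2) ^ 2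
      + 4 * B * (μ * C + 2 * B * E) * s ^ 2 - 4 * μ ^ 2 = 0) (u : K) :
    2 * E + 2 * μ * u - u ^ 2 * (C - B * u) ^ 2 = 0 ↔
      u = 1 / (2 * B) * (C + B * s + A) ∨ u = 1 / (2 * B) * (C + B * s - A) ∨
      u = 1 / (2 * B) * (C - B * s + D) ∨ u = 1 / (2 * B) * (C - B * s - D) := by
  have h16 : 16 * B ^ 2 ≠ 0 := by
    rw [show (16 : K) * B ^ 2 = (2 * (2 * B)) ^ 2 by ring]
    exact pow_ne_zero 2 (mul_ne_zero (left_ne_zero_of_mul h2B) h2B)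
  have solve : ∀ t, u = 1 / (2 * B) * t ↔ 2 * B * u = t := fun t => by
    rw [one_div, ← div_eq_inv_mul, eq_div_iff h2B, mul_comm]
  rw [← mul_eq_zero_iff_left h16, ferrari_factorization hs hA hD hcubic, neg_eq_zero,
    mul_eq_zero, sub_eq_zero, sub_eq_zero, sq_eq_sq_iff_eq_or_eq_neg, sq_eq_sq_iff_eq_or_eq_neg,
    or_assoc]
  simp only [solve]
  refine or_congr ?_ (or_congr ?_ (or_congr ?_ ?_)) <;>
    constructor <;> intro h <;> linear_combination h

end Ferrari

theorem Complex.cpow_one_div_two_sq (z : ℂ) : (z ^ ((1 : ℂ) / 2)) ^ 2 = z := by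
  simpa only [one_div, Nat.cast_ofNat] using Complex.cpow_nat_inv_pow z two_ne_zero

theorem resolvent_cubic_clear_denom {B C E μ l : ℝ} (hB : B ≠ 0)
    (hcubic : l ^ 3 - (C ^ 2 / B ^ 2) * l ^ 2
      + (4 / B ^ 3) * (μ * C + 2 * B * E) * l - 4 * μ ^ 2 / B ^ 4 = 0) :
    B ^ 4 * l ^ 3 - B ^ 2 * C ^ 2 * l ^ 2 + 4 * B * (μ * C + 2 * B * E) * l - 4 * μ ^ 2 = 0 := by
  field_simp at hcubic
  linear_combination hcubic

theorem stmt_5 (B C E μ : ℝ) (hB : B ≠ 0) (l : ℝ) (hl : 0 < l)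
    (hcubic : l ^ 3 - (C ^ 2 / B ^ 2) * l ^ 2
      + (4 / B ^ 3) * (μ * C + 2 * B * E) * l - 4 * μ ^ 2 / B ^ 4 = 0) :
    ∀ u : ℂ,
      2 * (E : ℂ) + 2 * (μ : ℂ) * u - u ^ 2 * ((C : ℂ) - (B : ℂ) * u) ^ 2 = 0 ↔
      u ∈ ({(1 / (2 * (B : ℂ))) * ((C : ℂ) + (B : ℂ) * (Real.sqrt l : ℂ)
              + ((C ^ 2 - B ^ 2 * l + 4 * μ / Real.sqrt l : ℝ) : ℂ) ^ ((1 : ℂ) / 2)),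
            (1 / (2 * (B : ℂ))) * ((C : ℂ) + (B : ℂ) * (Real.sqrt l : ℂ)
              - ((C ^ 2 - B ^ 2 * l + 4 * μ / Real.sqrt l : ℝ) : ℂ) ^ ((1 : ℂ) / 2)),
            (1 / (2 * (B : ℂ))) * ((C : ℂ) - (B : ℂ) * (Real.sqrt l : ℂ)
              + ((C ^ 2 - B ^ 2 * l - 4 * μ / Real.sqrt l : ℝ) : ℂ) ^ ((1 : ℂ) / 2)),
            (1 / (2 * (B : ℂ))) * ((C : ℂ) - (B : ℂ) * (Real.sqrt l : ℂ)
              - ((C ^ 2 - B ^ 2 * l - 4 * μ / Real.sqrt l : ℝ) : ℂ) ^ ((1 : ℂ) / 2))} : Set ℂ) := by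
  intro u
  have hs : (Real.sqrt l : ℂ) ^ 2 = l := by exact_mod_cast Real.sq_sqrt hl.le
  have hs0 : (Real.sqrt l : ℂ) ≠ 0 := by exact_mod_cast (Real.sqrt_pos.mpr hl).ne'
  have hcubicC : (B : ℂ) ^ 4 * (l : ℂ) ^ 3 - (B : ℂ) ^ 2 * (C : ℂ) ^ 2 * (l : ℂ) ^ 2
      + 4 * (B : ℂ) * ((μ : ℂ) * C + 2 * B * E) * l - 4 * (μ : ℂ) ^ 2 = 0 := by
    exact_mod_cast resolvent_cubic_clear_denom hB hcubic
  rw [← hs] at hcubicC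
  simp only [Set.mem_insert_iff, Set.mem_singleton_iff]
  refine quartic_eq_zero_iff (by exact_mod_cast mul_ne_zero two_ne_zero hB) hs0 ?_ ?_ hcubicC u
  all_goals rw [Complex.cpow_one_div_two_sq]; push_cast; rw [hs]
end

section
/- Define R(ξ,η) = −(μ/λ)·r + (λ/2)·log(x²+y²) + σ²·arctan(y/x) and S(ξ,η) analogously with S = λ·arctan(y/x) − (σ²/2)·log(x²+y²), where r = √(x²+y²+z²). Then for the vector field v = ∇R + ∇S the radial coordinate r(t) along any solution of dX/dt = v(X) satisfies dr/dt = (λ(λ−σ²) − μr)/(λr). In particular r(t) → r_c := λ(λ−σ²)/μ as t → ∞ whenever r(0) > 0, μ > 0, 0 < σ² < λ. -/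
/-- Partial derivative in the `i`-th coordinate. -/
noncomputable def pd (i : Fin 3) (f : (Fin 3 → ℝ) → ℝ) (x : Fin 3 → ℝ) : ℝ :=
  deriv (fun s => f (Function.update x i s)) (x i)

noncomputable def norm3 (v : Fin 3 → ℝ) : ℝ :=
  Real.sqrt (v 0 ^ 2 + v 1 ^ 2 + v 2 ^ 2)

/-!
The potentials `R` and `S` are combinations of `r = norm3 x` (homogeneous of degree one),
`log (x² + y²)` and the angle `arctan (y / x)` (homogeneous of degree zero). Euler's identity
therefore gives `x · ∇(R + S) = -(μ / λ) r + λ - σ²`, and `dr/dt = X · X' / r` is the claimed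
radial equation `r' = (μ / λ) (r_c - r) / r`. Along it `(r - r_c)²` is nonincreasing, which bounds
`r` above by some `M`; then `((r - r_c)²)' ≤ -(2μ / λM) (r - r_c)²`, and Grönwall's inequality
gives exponential convergence.
-/

open Filter Real Topology

lemma hasDerivAt_arctan_div_const (a s : ℝ) :
    HasDerivAt (fun t => arctan (t / a)) (a / (a ^ 2 + s ^ 2)) s := by
  -- for `a = 0` the function is `arctan (t / 0) = 0`, and so is the claimed derivative
  rcases eq_or_ne a 0 with rfl | ha
  · simpa using hasDerivAt_const s (0 : ℝ)
  · convert ((hasDerivAt_id' s).div_const a).arctan using 1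
    field_simp

lemma hasDerivAt_arctan_const_div (b : ℝ) {s : ℝ} (hs : s ≠ 0) :
    HasDerivAt (fun t => arctan (b / t)) (-b / (s ^ 2 + b ^ 2)) s := by
  convert ((hasDerivAt_inv hs).const_mul b).arctan using 1
  · ext t; simp [div_eq_mul_inv]
  · field_simp

lemma le_mul_exp_of_hasDerivAt_le_neg_mul {h h' : ℝ → ℝ} {k : ℝ}
    (hd : ∀ t, HasDerivAt h (h' t) t) (hle : ∀ t, 0 ≤ t → h' t ≤ -k * h t)
    {t : ℝ} (ht : 0 ≤ t) : h t ≤ h 0 * exp (-k * t) := by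
  have := le_gronwallBound_of_liminf_deriv_right_le (K := -k) (ε := 0) (a := 0) (b := t)
    (fun x _ => (hd x).continuousAt.continuousWithinAt)
    (fun x _ _ hr => (hd x).hasDerivWithinAt.liminf_right_slope_le hr) le_rfl
    (fun x hx => by simpa using hle x hx.1) t ⟨ht, le_rfl⟩
  simpa [gronwallBound_ε0] using this

noncomputable def potential (a b c : ℝ) (x : Fin 3 → ℝ) : ℝ :=
  a * norm3 x + b * log (x 0 ^ 2 + x 1 ^ 2) + c * arctan (x 1 / x 0)

lemma sum_sq_pos {x : Fin 3 → ℝ} (hx : x 0 ^ 2 + x 1 ^ 2 ≠ 0) :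
    0 < x 0 ^ 2 + x 1 ^ 2 + x 2 ^ 2 := by
  positivity

lemma norm3_pos {x : Fin 3 → ℝ} (hx : x 0 ^ 2 + x 1 ^ 2 ≠ 0) : 0 < norm3 x :=
  sqrt_pos.2 (sum_sq_pos hx)

lemma norm3_sq (x : Fin 3 → ℝ) : norm3 x ^ 2 = x 0 ^ 2 + x 1 ^ 2 + x 2 ^ 2 :=
  sq_sqrt (by positivity)

lemma pd_zero_potential (a b c : ℝ) {x : Fin 3 → ℝ} (hx : x 0 ≠ 0) :
    pd 0 (potential a b c) x = a * (x 0 / norm3 x) + b * (2 * x 0 / (x 0 ^ 2 + x 1 ^ 2))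
      + c * (-x 1 / (x 0 ^ 2 + x 1 ^ 2)) := by
  have hρ : x 0 ^ 2 + x 1 ^ 2 ≠ 0 := by positivity
  have hsq : HasDerivAt (fun s => s ^ 2 + x 1 ^ 2) (2 * x 0) (x 0) := by
    simpa using (hasDerivAt_pow 2 (x 0)).add_const (x 1 ^ 2)
  have hd := ((((hsq.add_const (x 2 ^ 2)).sqrt (sum_sq_pos hρ).ne').const_mul a).add
    ((hsq.log hρ).const_mul b)).add ((hasDerivAt_arctan_const_div (x 1) hx).const_mul c)
  have : (fun s => potential a b c (Function.update x 0 s)) =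
      fun s => a * √(s ^ 2 + x 1 ^ 2 + x 2 ^ 2) + b * log (s ^ 2 + x 1 ^ 2)
        + c * arctan (x 1 / s) := by
    ext s; simp [potential, norm3]
  rw [pd, this]
  refine hd.deriv.trans ?_
  rw [norm3]
  field_simp

lemma pd_one_potential (a b c : ℝ) {x : Fin 3 → ℝ} (hρ : x 0 ^ 2 + x 1 ^ 2 ≠ 0) :
    pd 1 (potential a b c) x = a * (x 1 / norm3 x) + b * (2 * x 1 / (x 0 ^ 2 + x 1 ^ 2))
      + c * (x 0 / (x 0 ^ 2 + x 1 ^ 2)) := by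
  have hsq : HasDerivAt (fun s => x 0 ^ 2 + s ^ 2) (2 * x 1) (x 1) := by
    simpa using (hasDerivAt_pow 2 (x 1)).const_add (x 0 ^ 2)
  have hd := ((((hsq.add_const (x 2 ^ 2)).sqrt (sum_sq_pos hρ).ne').const_mul a).add
    ((hsq.log hρ).const_mul b)).add ((hasDerivAt_arctan_div_const (x 0) (x 1)).const_mul c)
  have : (fun s => potential a b c (Function.update x 1 s)) =
      fun s => a * √(x 0 ^ 2 + s ^ 2 + x 2 ^ 2) + b * log (x 0 ^ 2 + s ^ 2)
        + c * arctan (s / x 0) := by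
    ext s; simp [potential, norm3]
  rw [pd, this]
  refine hd.deriv.trans ?_
  rw [norm3]
  field_simp

lemma pd_two_potential (a b c : ℝ) {x : Fin 3 → ℝ} (hρ : x 0 ^ 2 + x 1 ^ 2 ≠ 0) :
    pd 2 (potential a b c) x = a * (x 2 / norm3 x) := by
  have hsq : HasDerivAt (fun s => x 0 ^ 2 + x 1 ^ 2 + s ^ 2) (2 * x 2) (x 2) := by
    simpa using (hasDerivAt_pow 2 (x 2)).const_add (x 0 ^ 2 + x 1 ^ 2)
  have hd := ((hsq.sqrt (sum_sq_pos hρ).ne').const_mul a).add_const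
    (b * log (x 0 ^ 2 + x 1 ^ 2) + c * arctan (x 1 / x 0))
  have : (fun s => potential a b c (Function.update x 2 s)) =
      fun s => a * √(x 0 ^ 2 + x 1 ^ 2 + s ^ 2)
        + (b * log (x 0 ^ 2 + x 1 ^ 2) + c * arctan (x 1 / x 0)) := by
    ext s; simp [potential, norm3]; ring
  rw [pd, this]
  refine hd.deriv.trans ?_
  rw [norm3]
  field_simp

lemma radial_pd_potential (a b c : ℝ) {x : Fin 3 → ℝ} (hρ : x 0 ^ 2 + x 1 ^ 2 ≠ 0) :
    x 0 * pd 0 (potential a b c) x + x 1 * pd 1 (potential a b c) x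
      + x 2 * pd 2 (potential a b c) x = a * norm3 x + 2 * b := by
  -- on the plane `x 0 = 0` the angle is not differentiable in `x 0` (`pd` is then junk `0`),
  -- but that term is multiplied by `x 0`
  have h0 : x 0 * pd 0 (potential a b c) x = x 0 * (a * (x 0 / norm3 x)
      + b * (2 * x 0 / (x 0 ^ 2 + x 1 ^ 2)) + c * (-x 1 / (x 0 ^ 2 + x 1 ^ 2))) := by
    rcases eq_or_ne (x 0) 0 with hx | hx
    · simp [hx]
    · rw [pd_zero_potential a b c hx]
  rw [h0, pd_one_potential a b c hρ, pd_two_potential a b c hρ]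
  field_simp [(norm3_pos hρ).ne']
  linear_combination (-(a * (x 0 ^ 2 + x 1 ^ 2))) * norm3_sq x

lemma HasDerivAt.norm3_comp {X : ℝ → Fin 3 → ℝ} {v : Fin 3 → ℝ} {t : ℝ}
    (hX : HasDerivAt X v t) (ht : X t 0 ^ 2 + X t 1 ^ 2 ≠ 0) :
    HasDerivAt (fun s => norm3 (X s))
      ((X t 0 * v 0 + X t 1 * v 1 + X t 2 * v 2) / norm3 (X t)) t := by
  have hXi : ∀ i, HasDerivAt (fun s => X s i) (v i) t := hasDerivAt_pi.1 hX
  refine ((((hXi 0).fun_pow 2).fun_add ((hXi 1).fun_pow 2)).fun_add ((hXi 2).fun_pow 2)).sqrt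
    (sum_sq_pos ht).ne' |>.congr_deriv ?_
  rw [norm3]
  field_simp
  ring

lemma tendsto_of_hasDerivAt_mul_sub_div {r : ℝ → ℝ} {κ r₀ : ℝ} (hκ : 0 < κ)
    (hr : ∀ t, 0 < r t) (hr' : ∀ t, HasDerivAt r (κ * (r₀ - r t) / r t) t) :
    Tendsto r atTop (𝓝 r₀) := by
  set h : ℝ → ℝ := fun t => (r t - r₀) ^ 2
  have hh : ∀ t, HasDerivAt h (-(2 * κ / r t) * h t) t := fun t => by
    refine (((hr' t).sub_const r₀).fun_pow 2).congr_deriv ?_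
    field_simp [(hr t).ne']
    ring
  have hh_nonneg : ∀ t, 0 ≤ h t := fun t => sq_nonneg _
  -- the squared distance to `r₀` decreases, which bounds `r` from above on `[0, ∞)`
  set M := r₀ + |r 0 - r₀|
  have hrM : ∀ t, 0 ≤ t → r t ≤ M := fun t ht => by
    have hle : h t ≤ h 0 * exp (-0 * t) :=
      le_mul_exp_of_hasDerivAt_le_neg_mul hh
        (fun s _ => by nlinarith [div_pos (mul_pos two_pos hκ) (hr s), hh_nonneg s]) ht
    have : |r t - r₀| ≤ |r 0 - r₀| := sq_le_sq.mp (by simpa using hle)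
    linarith [le_abs_self (r t - r₀)]
  have hM : 0 < M := (hr 0).trans_le (hrM 0 le_rfl)
  have hdecay : ∀ t, 0 ≤ t → h t ≤ h 0 * exp (-(2 * κ / M) * t) := fun t =>
    le_mul_exp_of_hasDerivAt_le_neg_mul hh fun s hs => by
      have : 2 * κ / M ≤ 2 * κ / r s :=
        div_le_div_of_nonneg_left (by positivity) (hr s) (hrM s hs)
      nlinarith [hh_nonneg s]
  have hh0 : Tendsto h atTop (𝓝 0) := by
    refine tendsto_of_tendsto_of_tendsto_of_le_of_le' tendsto_const_nhds ?_
      (Eventually.of_forall hh_nonneg) ((eventually_ge_atTop 0).mono hdecay)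
    simpa using (tendsto_exp_neg_atTop_nhds_zero.comp
      (tendsto_id.const_mul_atTop (by positivity : 0 < 2 * κ / M))).const_mul (h 0)
  rw [tendsto_iff_dist_tendsto_zero]
  simpa [h, Real.dist_eq, Real.sqrt_sq_eq_abs] using hh0.sqrt

theorem stmt_15_general (μ lam σ : ℝ) (hμ : 0 < μ) (hsl : σ ^ 2 < lam)
    (R S : (Fin 3 → ℝ) → ℝ)
    (hR : ∀ x : Fin 3 → ℝ, R x = -(μ / lam) * norm3 x
      + (lam / 2) * Real.log (x 0 ^ 2 + x 1 ^ 2)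
      + σ ^ 2 * Real.arctan (x 1 / x 0))
    (hS : ∀ x : Fin 3 → ℝ, S x = lam * Real.arctan (x 1 / x 0)
      - (σ ^ 2 / 2) * Real.log (x 0 ^ 2 + x 1 ^ 2))
    (X : ℝ → Fin 3 → ℝ)
    (hdom : ∀ t, (X t 0) ^ 2 + (X t 1) ^ 2 ≠ 0)
    (hX : ∀ t, HasDerivAt X (fun i => pd i R (X t) + pd i S (X t)) t) :
    (∀ t, HasDerivAt (fun s => norm3 (X s))
        ((lam * (lam - σ ^ 2) - μ * norm3 (X t)) / (lam * norm3 (X t))) t) ∧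
    Filter.Tendsto (fun t => norm3 (X t)) Filter.atTop
      (nhds (lam * (lam - σ ^ 2) / μ)) := by
  have hlam : 0 < lam := (sq_nonneg σ).trans_lt hsl
  have hR' : R = potential (-(μ / lam)) (lam / 2) (σ ^ 2) := funext hR
  have hS' : S = potential 0 (-(σ ^ 2 / 2)) lam := funext fun x => by rw [hS, potential]; ring
  have hr : ∀ t, 0 < norm3 (X t) := fun t => norm3_pos (hdom t)
  have hderiv : ∀ t, HasDerivAt (fun s => norm3 (X s))
      ((lam * (lam - σ ^ 2) - μ * norm3 (X t)) / (lam * norm3 (X t))) t := fun t => by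
    refine ((hX t).norm3_comp (hdom t)).congr_deriv ?_
    have hRr := radial_pd_potential (-(μ / lam)) (lam / 2) (σ ^ 2) (hdom t)
    have hSr := radial_pd_potential 0 (-(σ ^ 2 / 2)) lam (hdom t)
    rw [← hR'] at hRr
    rw [← hS'] at hSr
    field_simp [(hr t).ne', hlam.ne']
    linear_combination (norm := (field_simp; ring)) lam * hRr + lam * hSr
  refine ⟨hderiv, tendsto_of_hasDerivAt_mul_sub_div (div_pos hμ hlam) hr fun t => ?_⟩
  refine (hderiv t).congr_deriv ?_
  field_simp

theorem stmt_15 (μ lam σ : ℝ) (hμ : 0 < μ) (hσ : 0 < σ ^ 2) (hsl : σ ^ 2 < lam)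
    (R S : (Fin 3 → ℝ) → ℝ)
    (hR : ∀ x : Fin 3 → ℝ, R x = -(μ / lam) * norm3 x
      + (lam / 2) * Real.log (x 0 ^ 2 + x 1 ^ 2)
      + σ ^ 2 * Real.arctan (x 1 / x 0))
    (hS : ∀ x : Fin 3 → ℝ, S x = lam * Real.arctan (x 1 / x 0)
      - (σ ^ 2 / 2) * Real.log (x 0 ^ 2 + x 1 ^ 2))
    (X : ℝ → Fin 3 → ℝ)
    (hdom : ∀ t, (X t 0) ^ 2 + (X t 1) ^ 2 ≠ 0)
    (hX : ∀ t, HasDerivAt X (fun i => pd i R (X t) + pd i S (X t)) t)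
    (hr0 : 0 < norm3 (X 0)) :
    (∀ t, HasDerivAt (fun s => norm3 (X s))
        ((lam * (lam - σ ^ 2) - μ * norm3 (X t)) / (lam * norm3 (X t))) t) ∧
    Filter.Tendsto (fun t => norm3 (X t)) Filter.atTop
      (nhds (lam * (lam - σ ^ 2) / μ)) :=
  stmt_15_general μ lam σ hμ hsl R S hR hS X hdom hX
end

section
/- Let f(x) = a₀x⁴+4a₁x³+6a₂x²+4a₃x+a₄ with x₀ a simple real root (f(x₀) = 0, f'(x₀) ≠ 0). Under the substitution x − x₀ = f'(x₀)/(4(y − f''(x₀)/24)), the expression (y − f''(x₀)/24)⁴·f(x) becomes the cubic (f'(x₀)/4)²·(4y³ − g₂y − g₃) in y, where g₂ = a₀a₄ − 4a₁a₃ + 3a₂² and g₃ = a₀a₂a₄ + 2a₁a₂a₃ − a₂³ − a₀a₃² − a₁²a₄. -/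
/-!
The invariants g₂, g₃ of a quartic are unchanged by translation, so we may expand f around the
root x₀: f(x₀ + h) = b₀h⁴ + 4b₁h³ + 6b₂h² + 4b₃h, where f'(x₀) = 4b₃ and f''(x₀)/24 = b₂/2.
The substitution reads h = b₃/t with t = y - b₂/2, and t⁴f = 4b₃²t³ + 6b₂b₃²t² + 4b₁b₃³t + b₀b₃⁴,
which is b₃²(4y³ - g₂y - g₃) once y = t + b₂/2 is substituted back, since b₄ = f(x₀) = 0.
-/

structure Quartic (K : Type*) where
  a₀ : K
  a₁ : K
  a₂ : K
  a₃ : K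
  a₄ : K

namespace Quartic

section Field

variable {K : Type*} [Field K] (q : Quartic K)

def eval (x : K) : K :=
  q.a₀ * x ^ 4 + 4 * q.a₁ * x ^ 3 + 6 * q.a₂ * x ^ 2 + 4 * q.a₃ * x + q.a₄

def g₂ : K := q.a₀ * q.a₄ - 4 * q.a₁ * q.a₃ + 3 * q.a₂ ^ 2

def g₃ : K :=
  q.a₀ * q.a₂ * q.a₄ + 2 * q.a₁ * q.a₂ * q.a₃ - q.a₂ ^ 3 - q.a₀ * q.a₃ ^ 2 - q.a₁ ^ 2 * q.a₄

@[simps]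
def shift (x₀ : K) : Quartic K where
  a₀ := q.a₀
  a₁ := q.a₀ * x₀ + q.a₁
  a₂ := q.a₀ * x₀ ^ 2 + 2 * q.a₁ * x₀ + q.a₂
  a₃ := q.a₀ * x₀ ^ 3 + 3 * q.a₁ * x₀ ^ 2 + 3 * q.a₂ * x₀ + q.a₃
  a₄ := q.eval x₀

theorem eval_shift (x₀ h : K) : (q.shift x₀).eval h = q.eval (x₀ + h) := by
  simp only [eval, shift_a₀, shift_a₁, shift_a₂, shift_a₃, shift_a₄]
  ring

theorem g₂_shift (x₀ : K) : (q.shift x₀).g₂ = q.g₂ := by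
  simp only [g₂, eval, shift_a₀, shift_a₁, shift_a₂, shift_a₃, shift_a₄]
  ring

theorem g₃_shift (x₀ : K) : (q.shift x₀).g₃ = q.g₃ := by
  simp only [g₃, eval, shift_a₀, shift_a₁, shift_a₂, shift_a₃, shift_a₄]
  ring

theorem pow_four_mul_eval_div_eq_weierstrass [NeZero (2 : K)] (h₄ : q.a₄ = 0) {t : K}
    (ht : t ≠ 0) :
    t ^ 4 * q.eval (q.a₃ / t) =
      q.a₃ ^ 2 * (4 * (t + q.a₂ / 2) ^ 3 - q.g₂ * (t + q.a₂ / 2) - q.g₃) := by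
  have h₂ : (2 : K) ≠ 0 := two_ne_zero
  simp only [eval, g₂, g₃, h₄]
  field_simp
  ring

end Field

section Deriv

variable {𝕜 : Type*} [NontriviallyNormedField 𝕜] (q : Quartic 𝕜)

theorem hasDerivAt_eval (x : 𝕜) : HasDerivAt q.eval (4 * (q.shift x).a₃) x := by
  have h := ((((hasDerivAt_pow 4 x).const_mul q.a₀).add
    ((hasDerivAt_pow 3 x).const_mul (4 * q.a₁))).add
    ((hasDerivAt_pow 2 x).const_mul (6 * q.a₂))).add
    ((hasDerivAt_id x).const_mul (4 * q.a₃)) |>.add_const q.a₄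
  exact h.congr_deriv (by simp only [shift_a₃]; push_cast; ring)

theorem deriv_eval : deriv q.eval = fun x ↦ 4 * (q.shift x).a₃ :=
  funext fun x ↦ (q.hasDerivAt_eval x).deriv

theorem deriv_deriv_eval (x : 𝕜) : deriv (deriv q.eval) x = 12 * (q.shift x).a₂ := by
  have h := ((((hasDerivAt_pow 3 x).const_mul q.a₀).add
    ((hasDerivAt_pow 2 x).const_mul (3 * q.a₁))).add
    ((hasDerivAt_id x).const_mul (3 * q.a₂))).add_const q.a₃ |>.const_mul 4
  rw [deriv_eval]
  exact h.deriv.trans (by simp only [shift_a₂]; push_cast; ring)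

end Deriv

end Quartic

theorem stmt_18_general (a₀ a₁ a₂ a₃ a₄ x₀ : ℝ)
    (f : ℝ → ℝ)
    (hf : ∀ x, f x = a₀ * x ^ 4 + 4 * a₁ * x ^ 3 + 6 * a₂ * x ^ 2 + 4 * a₃ * x + a₄)
    (hroot : f x₀ = 0)
    (g₂ g₃ : ℝ)
    (hg₂ : g₂ = a₀ * a₄ - 4 * a₁ * a₃ + 3 * a₂ ^ 2)
    (hg₃ : g₃ = a₀ * a₂ * a₄ + 2 * a₁ * a₂ * a₃ - a₂ ^ 3 - a₀ * a₃ ^ 2 - a₁ ^ 2 * a₄) :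
    ∀ x y : ℝ, y ≠ deriv (deriv f) x₀ / 24 →
      x - x₀ = deriv f x₀ / (4 * (y - deriv (deriv f) x₀ / 24)) →
      (y - deriv (deriv f) x₀ / 24) ^ 4 * f x
        = (deriv f x₀ / 4) ^ 2 * (4 * y ^ 3 - g₂ * y - g₃) := by
  intro x y hy hx
  let q : Quartic ℝ := ⟨a₀, a₁, a₂, a₃, a₄⟩
  obtain rfl : f = q.eval := funext hf
  obtain rfl : g₂ = q.g₂ := hg₂
  obtain rfl : g₃ = q.g₃ := hg₃
  have hf' : deriv q.eval x₀ = 4 * (q.shift x₀).a₃ := (q.hasDerivAt_eval x₀).deriv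
  have hf'' : deriv (deriv q.eval) x₀ / 24 = (q.shift x₀).a₂ / 2 := by
    rw [q.deriv_deriv_eval]; ring
  simp only [hf', hf''] at hy hx ⊢
  obtain ⟨t, ht, rfl⟩ : ∃ t ≠ 0, y = t + (q.shift x₀).a₂ / 2 :=
    ⟨y - (q.shift x₀).a₂ / 2, sub_ne_zero.mpr hy, by ring⟩
  rw [add_sub_cancel_right, mul_div_mul_left _ _ four_ne_zero] at hx
  rw [add_sub_cancel_right, eq_add_of_sub_eq' hx, ← q.eval_shift, ← q.g₂_shift x₀,
    ← q.g₃_shift x₀, (q.shift x₀).pow_four_mul_eval_div_eq_weierstrass hroot ht]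
  ring

theorem stmt_18 (a₀ a₁ a₂ a₃ a₄ x₀ : ℝ)
    (f : ℝ → ℝ)
    (hf : ∀ x, f x = a₀ * x ^ 4 + 4 * a₁ * x ^ 3 + 6 * a₂ * x ^ 2 + 4 * a₃ * x + a₄)
    (hroot : f x₀ = 0) (hsimple : deriv f x₀ ≠ 0)
    (g₂ g₃ : ℝ)
    (hg₂ : g₂ = a₀ * a₄ - 4 * a₁ * a₃ + 3 * a₂ ^ 2)
    (hg₃ : g₃ = a₀ * a₂ * a₄ + 2 * a₁ * a₂ * a₃ - a₂ ^ 3 - a₀ * a₃ ^ 2 - a₁ ^ 2 * a₄) :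
    ∀ x y : ℝ, y ≠ deriv (deriv f) x₀ / 24 →
      x - x₀ = deriv f x₀ / (4 * (y - deriv (deriv f) x₀ / 24)) →
      (y - deriv (deriv f) x₀ / 24) ^ 4 * f x
        = (deriv f x₀ / 4) ^ 2 * (4 * y ^ 3 - g₂ * y - g₃) :=
  stmt_18_general a₀ a₁ a₂ a₃ a₄ x₀ f hf hroot g₂ g₃ hg₂ hg₃
end
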